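/- arXiv:0911.1602 — 4 statements merged into one kernel-verified Lean document; each statement's English description precedes it below -/
import Mathlib

section
/- Let T be a 3-form on a Euclidean vector space V with orthonormal basis e_1,...,e_n, and define the 4-form σ_T := (1/2) Σ_i (e_i ⌟ T) ∧ (e_i ⌟ T). Then for all X,Y,Z,W in V, σ_T(X,Y,Z,W) = ⟨T(X,Y),T(Z,W)⟩ + ⟨T(Y,Z),T(X,W)⟩ + ⟨T(Z,X),T(Y,W)⟩, where T(X,Y) denotes the vector with ⟨T(X,Y),Z⟩ = T(X,Y,Z). -/
/-! Writing `T(A,B) = ∑ᵢ T(A,B,eᵢ) eᵢ = ∑ᵢ T(eᵢ,A,B) eᵢ` (cyclicity of a 3-form), Parseval gives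
`⟨T(A,B),T(C,D)⟩ = ∑ᵢ (eᵢ ⌟ T)(A,B) (eᵢ ⌟ T)(C,D)`. The six shuffle terms of `σ_T(X,Y,Z,W)`
pair up into three such sums. -/

open scoped RealInnerProductSpace

lemma cyclic_of_skew {V : Type*} (T : V → V → V → ℝ)
    (hskew1 : ∀ X Y Z, T X Y Z = - T Y X Z) (hskew2 : ∀ X Y Z, T X Y Z = - T X Z Y)
    (X Y Z : V) : T X Y Z = T Z X Y := by
  rw [hskew2, hskew1, neg_neg]

lemma inner_eq_sum_contraction_mul {ι E : Type*} [Fintype ι] [NormedAddCommGroup E]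
    [InnerProductSpace ℝ E] (e : OrthonormalBasis ι ℝ E) (T : E → E → E → ℝ) (t : E → E → E)
    (ht : ∀ X Y Z, ⟪t X Y, Z⟫ = T X Y Z) (hcyc : ∀ X Y Z, T X Y Z = T Z X Y) (A B C D : E) :
    ⟪t A B, t C D⟫ = ∑ i, T (e i) A B * T (e i) C D := by
  rw [← e.sum_inner_mul_inner]
  refine Finset.sum_congr rfl fun i _ => ?_
  rw [real_inner_comm (t C D), ht, ht, hcyc A, hcyc C]

theorem sigma_T_formula_general {n : ℕ}
    (T : EuclideanSpace ℝ (Fin n) → EuclideanSpace ℝ (Fin n) → EuclideanSpace ℝ (Fin n) → ℝ)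
    (hskew1 : ∀ X Y Z, T X Y Z = - T Y X Z)
    (hskew2 : ∀ X Y Z, T X Y Z = - T X Z Y)
    (t : EuclideanSpace ℝ (Fin n) → EuclideanSpace ℝ (Fin n) → EuclideanSpace ℝ (Fin n))
    (ht : ∀ X Y Z, (inner ℝ (t X Y) Z : ℝ) = T X Y Z)
    (e : OrthonormalBasis (Fin n) ℝ (EuclideanSpace ℝ (Fin n)))
    (X Y Z W : EuclideanSpace ℝ (Fin n)) :
    (1/2 : ℝ) * ∑ i, (T (e i) X Y * T (e i) Z W - T (e i) X Z * T (e i) Y W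
      + T (e i) X W * T (e i) Y Z + T (e i) Y Z * T (e i) X W
      - T (e i) Y W * T (e i) X Z + T (e i) Z W * T (e i) X Y)
      = (inner ℝ (t X Y) (t Z W) : ℝ) + inner ℝ (t Y Z) (t X W) + inner ℝ (t Z X) (t Y W) := by
  have hcyc := cyclic_of_skew T hskew1 hskew2
  simp only [inner_eq_sum_contraction_mul e T t ht hcyc, Finset.mul_sum,
    ← Finset.sum_add_distrib]
  refine Finset.sum_congr rfl fun i _ => ?_
  rw [hskew2 (e i) Z X]
  ring

/-- For a 3-form `T` on a Euclidean vector space with orthonormal basis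
`e₁,…,eₙ`, the 4-form `σ_T := (1/2) ∑ᵢ (eᵢ ⌟ T) ∧ (eᵢ ⌟ T)` satisfies
`σ_T(X,Y,Z,W) = ⟨T(X,Y),T(Z,W)⟩ + ⟨T(Y,Z),T(X,W)⟩ + ⟨T(Z,X),T(Y,W)⟩`,
where `T(X,Y)` is the vector with `⟨T(X,Y),Z⟩ = T(X,Y,Z)`.  The wedge product of the two
2-forms `eᵢ ⌟ T` is written out by the standard shuffle formula. -/
theorem sigma_T_formula {n : ℕ}
    (T : EuclideanSpace ℝ (Fin n) → EuclideanSpace ℝ (Fin n) → EuclideanSpace ℝ (Fin n) → ℝ)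
    (hlin : ∀ Y Z, IsLinearMap ℝ fun X => T X Y Z)
    (hskew1 : ∀ X Y Z, T X Y Z = - T Y X Z)
    (hskew2 : ∀ X Y Z, T X Y Z = - T X Z Y)
    (t : EuclideanSpace ℝ (Fin n) → EuclideanSpace ℝ (Fin n) → EuclideanSpace ℝ (Fin n))
    (ht : ∀ X Y Z, (inner ℝ (t X Y) Z : ℝ) = T X Y Z)
    (e : OrthonormalBasis (Fin n) ℝ (EuclideanSpace ℝ (Fin n)))
    (X Y Z W : EuclideanSpace ℝ (Fin n)) :
    (1/2 : ℝ) * ∑ i, (T (e i) X Y * T (e i) Z W - T (e i) X Z * T (e i) Y W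
      + T (e i) X W * T (e i) Y Z + T (e i) Y Z * T (e i) X W
      - T (e i) Y W * T (e i) X Z + T (e i) Z W * T (e i) X Y)
      = (inner ℝ (t X Y) (t Z W) : ℝ) + inner ℝ (t Y Z) (t X W) + inner ℝ (t Z X) (t Y W) :=
  sigma_T_formula_general T hskew1 hskew2 t ht e X Y Z W
end

section
/- Let ∇ be a flat metric connection with totally skew-symmetric torsion T on a Riemannian manifold. Then the Riemannian Ricci tensor satisfies Ric^g(X,Y) = (1/4) Σ_i ⟨T(X,e_i), T(Y,e_i)⟩ for any local orthonormal frame e_i, and the scalar curvature equals Scal^g = (3/2)‖T‖². In particular, Ric^g(X,X) ≥ 0, with equality if and only if X ⌟ T = 0. -/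
/-- An abstract calculus of vector fields on a Riemannian manifold: `C` is the ring of smooth
functions, `X` the `C`-module of vector fields, `g` the Riemannian metric, `D` the directional
derivative, `bracket` the Lie bracket and `lc` the Levi-Civita connection `∇^g`. -/
structure VectorFieldCalculus (C X : Type*) [CommRing C] [Algebra ℝ C]
    [AddCommGroup X] [Module C X] where
  g : X → X → C
  D : X → C → C
  bracket : X → X → X
  lc : X → X → X
  g_symm : ∀ a b, g a b = g b a
  g_add_left : ∀ a b c, g (a + b) c = g a c + g b c
  g_smul_left : ∀ (f : C) a b, g (f • a) b = f * g a b
  g_definite : ∀ a, g a a = 0 → a = 0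
  D_add : ∀ v f h, D v (f + h) = D v f + D v h
  D_mul : ∀ v f h, D v (f * h) = f * D v h + h * D v f
  D_algebraMap : ∀ v (r : ℝ), D v (algebraMap ℝ C r) = 0
  D_add_vec : ∀ v w f, D (v + w) f = D v f + D w f
  D_smul_vec : ∀ (f : C) v h, D (f • v) h = f * D v h
  bracket_antisymm : ∀ a b, bracket a b = - bracket b a
  bracket_jacobi : ∀ a b c,
    bracket (bracket a b) c + bracket (bracket b c) a + bracket (bracket c a) b = 0
  bracket_D : ∀ a b f, D (bracket a b) f = D a (D b f) - D b (D a f)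
  bracket_leibniz : ∀ a (f : C) b, bracket a (f • b) = D a f • b + f • bracket a b
  lc_add : ∀ z a b, lc z (a + b) = lc z a + lc z b
  lc_smul : ∀ z (f : C) a, lc z (f • a) = D z f • a + f • lc z a
  lc_add_vec : ∀ z w a, lc (z + w) a = lc z a + lc w a
  lc_smul_vec : ∀ (f : C) z a, lc (f • z) a = f • lc z a
  lc_metric : ∀ z a b, D z (g a b) = g (lc z a) b + g a (lc z b)
  lc_torsion_free : ∀ a b, lc a b - lc b a = bracket a b

/-- A vector field `k` is Killing iff `⟨∇_v k, w⟩ + ⟨∇_w k, v⟩ = 0` for all `v, w`. -/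
def VectorFieldCalculus.IsKilling {C X : Type*} [CommRing C] [Algebra ℝ C]
    [AddCommGroup X] [Module C X] (V : VectorFieldCalculus C X) (k : X) : Prop :=
  ∀ v w, V.g (V.lc v k) w + V.g (V.lc w k) v = 0

/-!
Pair the curvature of `∇ = ∇^g + ½T` with `z`: flatness gives
`⟨R^g(z,a)b, z⟩ + ½(∇^g_z T)(a,b,z) - ½(∇^g_a T)(z,b,z) - ¼⟨T(a,z), T(b,z)⟩ = 0`.
Since `∇^g T` is again a 3-form, the third term vanishes and the second is skew in `a, b`,
while `⟨R^g(z,a)b, z⟩` is symmetric in `a, b` by metricity and the first Bianchi identity.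
Symmetrizing in `a, b` gives `⟨R^g(z,a)b, z⟩ = ¼⟨T(a,z), T(b,z)⟩`; summing over the frame
yields the Ricci formula, and everything else follows from it.
-/

theorem eq_of_add_self_eq_add_self {C : Type*} [CommRing C] [Algebra ℝ C] {u v : C}
    (h : u + u = v + v) : u = v := by
  have half : algebraMap ℝ C (1/2) + algebraMap ℝ C (1/2) = 1 := by rw [← map_add]; norm_num
  linear_combination algebraMap ℝ C (1/2) * h - (u - v) * half

namespace VectorFieldCalculus

variable {C X : Type*} [CommRing C] [Algebra ℝ C] [AddCommGroup X] [Module C X]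
  (V : VectorFieldCalculus C X)

def gLeft (c : X) : X →ₗ[C] C where
  toFun a := V.g a c
  map_add' a b := V.g_add_left a b c
  map_smul' f a := V.g_smul_left f a c

@[simp] theorem g_zero_left (c : X) : V.g 0 c = 0 := (V.gLeft c).map_zero

@[simp] theorem g_neg_left (a c : X) : V.g (-a) c = -V.g a c := (V.gLeft c).map_neg a

theorem g_sub_left (a b c : X) : V.g (a - b) c = V.g a c - V.g b c := (V.gLeft c).map_sub a b

theorem g_add_right (a b c : X) : V.g a (b + c) = V.g a b + V.g a c := by
  rw [V.g_symm, V.g_add_left, V.g_symm b, V.g_symm c]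

theorem g_smul_right (f : C) (a b : X) : V.g a (f • b) = f * V.g a b := by
  rw [V.g_symm, V.g_smul_left, V.g_symm]

@[simp] theorem g_neg_right (a b : X) : V.g a (-b) = -V.g a b := by
  rw [V.g_symm, g_neg_left, V.g_symm]

theorem g_sum_right {ι : Type*} (s : Finset ι) (a : X) (v : ι → X) :
    V.g a (∑ i ∈ s, v i) = ∑ i ∈ s, V.g a (v i) := by
  simp only [V.g_symm a]
  exact map_sum (V.gLeft a) v s

theorem ext_of_g {u v : X} (h : ∀ c, V.g u c = V.g v c) : u = v :=
  sub_eq_zero.mp (V.g_definite _ (by rw [V.g_sub_left, h, sub_self]))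

theorem D_neg (v : X) (f : C) : V.D v (-f) = -V.D v f :=
  (AddMonoidHom.mk' (V.D v) (V.D_add v)).map_neg f

theorem lc_sub (z a b : X) : V.lc z (a - b) = V.lc z a - V.lc z b :=
  (AddMonoidHom.mk' (V.lc z) (V.lc_add z)).map_sub a b

theorem lc_neg_vec (z a : X) : V.lc (-z) a = -V.lc z a :=
  (AddMonoidHom.mk' (V.lc · a) (V.lc_add_vec · · a)).map_neg z

theorem lc_algebraMap_smul (z : X) (r : ℝ) (a : X) :
    V.lc z (algebraMap ℝ C r • a) = algebraMap ℝ C r • V.lc z a := by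
  rw [V.lc_smul, V.D_algebraMap, zero_smul, zero_add]

def curvature (nab : X → X → X) (a b c : X) : X :=
  nab a (nab b c) - nab b (nab a c) - nab (V.bracket a b) c

theorem g_curvature_lc_self (a b c : X) : V.g (V.curvature V.lc a b c) c = 0 := by
  have hD : ∀ x y, V.D x (V.g (V.lc y c) c)
      = V.g (V.lc x (V.lc y c)) c + V.g (V.lc y c) (V.lc x c) := fun x y => V.lc_metric x _ c
  have hcc : ∀ x, V.D x (V.g c c) = V.g (V.lc x c) c + V.g (V.lc x c) c := fun x => by
    rw [V.lc_metric, V.g_symm c]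
  have hbr := V.bracket_D a b (V.g c c)
  rw [hcc, hcc, hcc, V.D_add, V.D_add, hD, hD, V.g_symm (V.lc a c)] at hbr
  refine eq_of_add_self_eq_add_self ?_
  rw [curvature, V.g_sub_left, V.g_sub_left]
  linear_combination -hbr

theorem curvature_lc_antisymm (a b c : X) :
    V.curvature V.lc b a c = -V.curvature V.lc a b c := by
  rw [curvature, curvature, V.bracket_antisymm b a, V.lc_neg_vec]
  abel

theorem curvature_lc_bianchi (a b c : X) :
    V.curvature V.lc a b c + V.curvature V.lc b c a + V.curvature V.lc c a b = 0 := by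
  have expand : ∀ x y z, V.bracket x (V.bracket y z)
      = V.lc x (V.lc y z) - V.lc x (V.lc z y) - V.lc (V.bracket y z) x := fun x y z => by
    rw [← V.lc_torsion_free x, ← V.lc_torsion_free y z, V.lc_sub]
  have jac := V.bracket_jacobi a b c
  rw [V.bracket_antisymm (V.bracket a b), V.bracket_antisymm (V.bracket b c),
    V.bracket_antisymm (V.bracket c a), expand, expand, expand] at jac
  rw [curvature, curvature, curvature, ← neg_eq_zero, ← jac]
  abel

theorem g_curvature_lc_swap (z a b : X) :
    V.g (V.curvature V.lc z a b) z = V.g (V.curvature V.lc z b a) z := by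
  have bianchi := congrArg (V.g · z) (V.curvature_lc_bianchi z a b)
  simp only [V.g_add_left, V.curvature_lc_antisymm z b, V.g_neg_left, V.g_curvature_lc_self,
    g_zero_left] at bianchi
  linear_combination bianchi

section Frame

variable {ι : Type*} [Fintype ι] {e : ι → X}

theorem g_eq_sum_mul (hspan : ∀ a, a = ∑ i, V.g a (e i) • e i) (v w : X) :
    V.g v w = ∑ i, V.g v (e i) * V.g w (e i) := by
  conv_lhs => rw [hspan w]
  simp only [V.g_sum_right, V.g_smul_right, mul_comm]

theorem linearMap_eq_zero_of_frame (hspan : ∀ a, a = ∑ i, V.g a (e i) • e i)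
    {Y : Type*} [AddCommGroup Y] [Module C Y] (f : X →ₗ[C] Y) (hf : ∀ i, f (e i) = 0) :
    f = 0 :=
  LinearMap.ext fun b => by rw [hspan b, map_sum]; simp [hf]

theorem g_self_nonneg [PartialOrder C] [IsOrderedAddMonoid C]
    (hspan : ∀ a, a = ∑ i, V.g a (e i) • e i) (hsq : ∀ f : C, 0 ≤ f * f) (v : X) :
    0 ≤ V.g v v := by
  rw [V.g_eq_sum_mul hspan]
  exact Finset.sum_nonneg fun i _ => hsq _

theorem sum_g_self_eq_zero_iff [PartialOrder C] [IsOrderedAddMonoid C]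
    (hspan : ∀ a, a = ∑ i, V.g a (e i) • e i) (hsq : ∀ f : C, 0 ≤ f * f)
    {κ : Type*} [Fintype κ] (v : κ → X) :
    ∑ k, V.g (v k) (v k) = 0 ↔ ∀ k, v k = 0 := by
  rw [Finset.sum_eq_zero_iff_of_nonneg fun k _ => V.g_self_nonneg hspan hsq (v k)]
  exact ⟨fun h k => V.g_definite _ (h k (Finset.mem_univ k)), fun h k _ => by simp [h k]⟩

end Frame

structure IsSkewTorsion (t : X → X → X) : Prop where
  swap_left : ∀ a b c, V.g (t a b) c = -V.g (t b a) c
  swap_right : ∀ a b c, V.g (t a b) c = -V.g (t a c) b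

/-- `(∇^g_x T)(a, b, c)` for the 3-form `T(a, b, c) = ⟨t a b, c⟩`. -/
def torsionCovDeriv (t : X → X → X) (x a b c : X) : C :=
  V.D x (V.g (t a b) c) - V.g (t (V.lc x a) b) c - V.g (t a (V.lc x b)) c
    - V.g (t a b) (V.lc x c)

namespace IsSkewTorsion

variable {V} {t : X → X → X}

theorem swap (ht : V.IsSkewTorsion t) (a b : X) : t b a = -t a b :=
  V.ext_of_g fun c => by rw [V.g_neg_left, ht.swap_left]

theorem g_cycle (ht : V.IsSkewTorsion t) (a b c : X) : V.g (t a b) c = V.g (t c a) b := by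
  rw [ht.swap_right, ht.swap_left, neg_neg]

theorem apply_self (ht : V.IsSkewTorsion t) (a : X) : t a a = 0 :=
  V.ext_of_g fun c => eq_of_add_self_eq_add_self <| by
    rw [V.g_zero_left, add_zero]
    nth_rw 2 [ht.swap_left]
    exact add_neg_cancel _

theorem g_apply_left (ht : V.IsSkewTorsion t) (a b : X) : V.g (t a b) a = 0 := by
  rw [ht.g_cycle, ht.apply_self, V.g_zero_left]

theorem add_right (ht : V.IsSkewTorsion t) (a u v : X) : t a (u + v) = t a u + t a v :=
  V.ext_of_g fun c => by
    rw [ht.swap_right, V.g_add_right, V.g_add_left, ht.swap_right a u, ht.swap_right a v]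
    ring

theorem smul_right (ht : V.IsSkewTorsion t) (a : X) (f : C) (u : X) :
    t a (f • u) = f • t a u :=
  V.ext_of_g fun c => by
    rw [ht.swap_right, V.g_smul_right, V.g_smul_left, ht.swap_right a u]
    ring

def linearMapRight (ht : V.IsSkewTorsion t) (a : X) : X →ₗ[C] X where
  toFun := t a
  map_add' := ht.add_right a
  map_smul' := ht.smul_right a

theorem sub_left (ht : V.IsSkewTorsion t) (u v b : X) : t (u - v) b = t u b - t v b := by
  rw [ht.swap b, show t b (u - v) = t b u - t b v from (ht.linearMapRight b).map_sub u v,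
    ht.swap b u, ht.swap b v]
  abel

theorem g_apply_apply (ht : V.IsSkewTorsion t) (a b z : X) :
    V.g (t a (t z b)) z = V.g (t a z) (t b z) := by
  rw [ht.swap_right, ht.swap b z, V.g_neg_right, neg_neg]

theorem sum_g_self_apply_eq_zero_iff [PartialOrder C] [IsOrderedAddMonoid C]
    (ht : V.IsSkewTorsion t) {ι : Type*} [Fintype ι] {e : ι → X}
    (hspan : ∀ a, a = ∑ i, V.g a (e i) • e i) (hsq : ∀ f : C, 0 ≤ f * f) (a : X) :
    ∑ i, V.g (t a (e i)) (t a (e i)) = 0 ↔ ∀ b c, V.g (t a b) c = 0 := by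
  refine ⟨fun h b c => ?_, fun h => Finset.sum_eq_zero fun i _ => h (e i) (t a (e i))⟩
  have hzero := V.linearMap_eq_zero_of_frame hspan (ht.linearMapRight a)
    ((V.sum_g_self_eq_zero_iff hspan hsq _).mp h)
  rw [show t a b = 0 from LinearMap.congr_fun hzero b, V.g_zero_left]

theorem torsionCovDeriv_swap_left (ht : V.IsSkewTorsion t) (x a b c : X) :
    V.torsionCovDeriv t x b a c = -V.torsionCovDeriv t x a b c := by
  rw [torsionCovDeriv, torsionCovDeriv, ht.swap_left b a, ht.swap_left (V.lc x b) a,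
    ht.swap_left b (V.lc x a), ht.swap_left b a, V.D_neg]
  ring

theorem torsionCovDeriv_swap_right (ht : V.IsSkewTorsion t) (x a b c : X) :
    V.torsionCovDeriv t x a c b = -V.torsionCovDeriv t x a b c := by
  rw [torsionCovDeriv, torsionCovDeriv, ht.swap_right a c, ht.swap_right (V.lc x a) c,
    ht.swap_right a (V.lc x c), ht.swap_right a c, V.D_neg]
  ring

theorem torsionCovDeriv_self_right (ht : V.IsSkewTorsion t) (x a b : X) :
    V.torsionCovDeriv t x a b a = 0 := by
  have hdiag : V.torsionCovDeriv t x a a b = 0 := eq_of_add_self_eq_add_self <| by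
    nth_rw 2 [ht.torsionCovDeriv_swap_left]
    rw [add_neg_cancel, add_zero]
  rw [ht.torsionCovDeriv_swap_right, hdiag, neg_zero]

theorem g_curvature_lc_add_smul (ht : V.IsSkewTorsion t) (r : ℝ) (x y w z : X) :
    V.g (V.curvature (fun a b => V.lc a b + algebraMap ℝ C r • t a b) x y w) z
      = V.g (V.curvature V.lc x y w) z
        + algebraMap ℝ C r * (V.torsionCovDeriv t x y w z - V.torsionCovDeriv t y x w z)
        + algebraMap ℝ C r ^ 2 * (V.g (t x (t y w)) z - V.g (t y (t x w)) z) := by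
  simp only [curvature, torsionCovDeriv, V.lc_add, V.lc_algebraMap_smul, ht.add_right,
    ht.smul_right, ← V.lc_torsion_free, ht.sub_left, V.g_add_left, V.g_sub_left, V.g_smul_left,
    V.lc_metric]
  ring

theorem g_curvature_lc_self_of_flat (ht : V.IsSkewTorsion t) (r : ℝ)
    (hflat : ∀ x y w, V.curvature (fun a b => V.lc a b + algebraMap ℝ C r • t a b) x y w = 0)
    (z a b : X) :
    V.g (V.curvature V.lc z a b) z = algebraMap ℝ C r ^ 2 * V.g (t a z) (t b z) := by
  have flat_at : ∀ a b, V.g (V.curvature V.lc z a b) z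
      + algebraMap ℝ C r * V.torsionCovDeriv t z a b z
      - algebraMap ℝ C r ^ 2 * V.g (t a z) (t b z) = 0 := fun a b => by
    have h := ht.g_curvature_lc_add_smul r z a b z
    rw [hflat, V.g_zero_left, ht.torsionCovDeriv_self_right, ht.g_apply_left,
      ht.g_apply_apply] at h
    linear_combination -h
  refine eq_of_add_self_eq_add_self ?_
  linear_combination flat_at a b + flat_at b a + V.g_curvature_lc_swap z a b
    - algebraMap ℝ C r * ht.torsionCovDeriv_swap_left z a b z
    - algebraMap ℝ C r ^ 2 * V.g_symm (t a z) (t b z)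

end IsSkewTorsion

end VectorFieldCalculus

theorem ricci_of_flat_skew_torsion_general {C X : Type*} [CommRing C] [PartialOrder C] [IsOrderedRing C] [Algebra ℝ C]
    [AddCommGroup X] [Module C X] {n : ℕ}
    (V : VectorFieldCalculus C X)
    (t : X → X → X)
    (hskew1 : ∀ a b c, V.g (t a b) c = - V.g (t b a) c)
    (hskew2 : ∀ a b c, V.g (t a b) c = - V.g (t a c) b)
    -- the flat metric connection ∇ a b = ∇^g a b + (1/2) T(a,b,·)
    (nab : X → X → X)
    (hnab : ∀ a b, nab a b = V.lc a b + algebraMap ℝ C (1/2) • t a b)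
    (hflat : ∀ a b c, nab a (nab b c) - nab b (nab a c) - nab (V.bracket a b) c = 0)
    -- a global orthonormal frame
    (e : Fin n → X)
    (hspan : ∀ a, a = ∑ i, V.g a (e i) • e i)
    -- squares of functions are nonnegative
    (hsq : ∀ f : C, 0 ≤ f * f)
    -- Riemannian curvature and Ricci tensor of the Levi-Civita connection
    (Rg : X → X → X → X)
    (hRg : ∀ a b c, Rg a b c =
      V.lc a (V.lc b c) - V.lc b (V.lc a c) - V.lc (V.bracket a b) c)
    (Ric : X → X → C)
    (hRic : ∀ a b, Ric a b = ∑ i, V.g (Rg (e i) a b) (e i)) :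
    (∀ a b, Ric a b = algebraMap ℝ C (1/4) * ∑ i, V.g (t a (e i)) (t b (e i)))
    ∧ (∑ i, Ric (e i) (e i)
        = algebraMap ℝ C (3/2)
          * (algebraMap ℝ C (1/6) * ∑ i, ∑ j, ∑ k, (V.g (t (e i) (e j)) (e k))^2))
    ∧ (∀ a, 0 ≤ Ric a a)
    ∧ (∀ a, Ric a a = 0 ↔ ∀ b c, V.g (t a b) c = 0) := by
  obtain rfl : Rg = V.curvature V.lc := by funext a b c; exact hRg a b c
  obtain rfl : nab = fun a b => V.lc a b + algebraMap ℝ C (1/2) • t a b := by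
    funext a b; exact hnab a b
  have ht : V.IsSkewTorsion t := ⟨hskew1, hskew2⟩
  have ricci : ∀ a b, Ric a b = algebraMap ℝ C (1/4) * ∑ i, V.g (t a (e i)) (t b (e i)) := by
    intro a b
    rw [hRic, Finset.mul_sum]
    refine Finset.sum_congr rfl fun i _ => ?_
    rw [ht.g_curvature_lc_self_of_flat (1/2) hflat, ← map_pow]
    norm_num
  -- the order of `C` is only tied to squares, and `1/4 = (1/2)^2`
  have quarter_nonneg : 0 ≤ algebraMap ℝ C (1/4) := by
    have h := hsq (algebraMap ℝ C (1/2))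
    rwa [← map_mul, show (1/2 : ℝ) * (1/2) = 1/4 by norm_num] at h
  have quarter_isUnit : IsUnit (algebraMap ℝ C (1/4)) :=
    (isUnit_iff_ne_zero.mpr (by norm_num)).map _
  refine ⟨ricci, ?_, fun a => ?_, fun a => ?_⟩
  · rw [← mul_assoc, ← map_mul, show (3/2 : ℝ) * (1/6) = 1/4 by norm_num, Finset.mul_sum]
    refine Finset.sum_congr rfl fun i _ => ?_
    rw [ricci]
    congr 1
    refine Finset.sum_congr rfl fun j _ => ?_
    rw [V.g_eq_sum_mul hspan]
    simp only [sq]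
  · rw [ricci]
    exact mul_nonneg quarter_nonneg (Finset.sum_nonneg fun i _ => V.g_self_nonneg hspan hsq _)
  · rw [ricci, quarter_isUnit.mul_right_eq_zero, ht.sum_g_self_apply_eq_zero_iff hspan hsq]

/-- Let `∇ = ∇^g + (1/2)T` be a flat metric connection with totally
skew-symmetric torsion `T ∈ Λ³(M)` (`t a b` is the vector with `⟨t a b, c⟩ = T(a,b,c)`).
Then, for an orthonormal frame `e i`,
`Ric^g(a,b) = (1/4) ∑ᵢ ⟨T(a,eᵢ),T(b,eᵢ)⟩`, `Scal^g = (3/2)‖T‖²`, and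
`Ric^g(a,a) ≥ 0` with equality iff `a ⌟ T = 0`. -/
theorem ricci_of_flat_skew_torsion {C X : Type*} [CommRing C] [PartialOrder C] [IsOrderedRing C] [Algebra ℝ C]
    [AddCommGroup X] [Module C X] {n : ℕ}
    (V : VectorFieldCalculus C X)
    (t : X → X → X)
    (hskew1 : ∀ a b c, V.g (t a b) c = - V.g (t b a) c)
    (hskew2 : ∀ a b c, V.g (t a b) c = - V.g (t a c) b)
    -- the flat metric connection ∇ a b = ∇^g a b + (1/2) T(a,b,·)
    (nab : X → X → X)
    (hnab : ∀ a b, nab a b = V.lc a b + algebraMap ℝ C (1/2) • t a b)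
    (hflat : ∀ a b c, nab a (nab b c) - nab b (nab a c) - nab (V.bracket a b) c = 0)
    -- a global orthonormal frame
    (e : Fin n → X)
    (horth : ∀ i j, V.g (e i) (e j) = if i = j then 1 else 0)
    (hspan : ∀ a, a = ∑ i, V.g a (e i) • e i)
    -- squares of functions are nonnegative
    (hsq : ∀ f : C, 0 ≤ f * f)
    -- Riemannian curvature and Ricci tensor of the Levi-Civita connection
    (Rg : X → X → X → X)
    (hRg : ∀ a b c, Rg a b c =
      V.lc a (V.lc b c) - V.lc b (V.lc a c) - V.lc (V.bracket a b) c)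
    (Ric : X → X → C)
    (hRic : ∀ a b, Ric a b = ∑ i, V.g (Rg (e i) a b) (e i)) :
    (∀ a b, Ric a b = algebraMap ℝ C (1/4) * ∑ i, V.g (t a (e i)) (t b (e i)))
    ∧ (∑ i, Ric (e i) (e i)
        = algebraMap ℝ C (3/2)
          * (algebraMap ℝ C (1/6) * ∑ i, ∑ j, ∑ k, (V.g (t (e i) (e j)) (e k))^2))
    ∧ (∀ a, 0 ≤ Ric a a)
    ∧ (∀ a, Ric a a = 0 ↔ ∀ b c, V.g (t a b) c = 0) :=
  ricci_of_flat_skew_torsion_general V t hskew1 hskew2 nab hnab hflat e hspan hsq Rg hRg Ric hRic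
end

section
/- Let (M,g) be a Riemannian manifold and V a vector field, and let ∇ be the metric connection with vectorial torsion: ∇_X Y = ∇^g_X Y + ⟨X,Y⟩V − ⟨V,Y⟩X. If ∇ is flat and ∇V = 0, then (M,g) has constant sectional curvature −‖V‖² and the divergence of V is the constant (n−1)‖V‖²; moreover ∇^g_V V = 0, i.e. the integral curves of V are geodesics. -/
namespace VectorFieldCalculus

variable {C X : Type*} [CommRing C] [Algebra ℝ C] [AddCommGroup X] [Module C X]
  (V : VectorFieldCalculus C X)

def vectorialTorsion (v a b : X) : X :=
  V.lc a b + V.g a b • v - V.g v b • a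

theorem g_sub_right (a b c : X) : V.g a (b - c) = V.g a b - V.g a c := by
  rw [V.g_symm, g_sub_left, V.g_symm b, V.g_symm c]

theorem g_sum_smul_left {ι : Type*} [Fintype ι] (f : ι → C) (e : ι → X) (b : X) :
    V.g (∑ i, f i • e i) b = ∑ i, f i * V.g (e i) b := by
  simpa only [AddMonoidHom.mk'_apply, V.g_smul_left] using
    map_sum (AddMonoidHom.mk' (V.g · b) (V.g_add_left · · b)) (fun i ↦ f i • e i) Finset.univ

variable {V} {v : X}

theorem lc_eq_of_vectorialTorsion_eq_zero {a : X} (h : V.vectorialTorsion v a v = 0) :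
    V.lc a v = V.g v v • a - V.g a v • v := by
  unfold vectorialTorsion at h
  linear_combination (norm := module) h

theorem curvature_vectorialTorsion_of_parallel (h : ∀ a, V.vectorialTorsion v a v = 0)
    (a b c : X) :
    V.curvature (V.vectorialTorsion v) a b c =
      V.curvature V.lc a b c + V.g v v • (V.g b c • a - V.g a c • b) := by
  have hlc a := lc_eq_of_vectorialTorsion_eq_zero (h a)
  have htor : V.lc a b = V.bracket a b + V.lc b a := by
    linear_combination (norm := module) V.lc_torsion_free a b
  simp only [curvature, vectorialTorsion, V.lc_add, lc_sub, V.lc_smul, V.lc_metric, hlc,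
    htor, g_add_right, g_sub_right, g_smul_right, V.g_add_left, g_sub_left, V.g_smul_left]
  rw [V.g_symm v b, V.g_symm v a, V.g_symm b a]
  module

theorem sum_g_lc_eq_of_parallel {ι : Type*} [Fintype ι] {e : ι → X}
    (hnorm : ∀ i, V.g (e i) (e i) = 1) (hspan : ∀ a, a = ∑ i, V.g a (e i) • e i)
    (h : ∀ a, V.vectorialTorsion v a v = 0) :
    ∑ i, V.g (V.lc (e i) v) (e i) = ((Fintype.card ι : C) - 1) * V.g v v := by
  have hparseval : ∑ i, V.g (e i) v * V.g v (e i) = V.g v v := by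
    have hexpand := V.g_sum_smul_left (fun i ↦ V.g v (e i)) e v
    rw [← hspan v] at hexpand
    rw [hexpand]
    exact Finset.sum_congr rfl fun i _ ↦ mul_comm _ _
  calc ∑ i, V.g (V.lc (e i) v) (e i)
      = ∑ i, (V.g v v * V.g (e i) (e i) - V.g (e i) v * V.g v (e i)) := by
        refine Finset.sum_congr rfl fun i _ ↦ ?_
        rw [lc_eq_of_vectorialTorsion_eq_zero (h _), g_sub_left, V.g_smul_left, V.g_smul_left,
          V.g_symm v (e i)]
    _ = ((Fintype.card ι : C) - 1) * V.g v v := by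
        simp only [Finset.sum_sub_distrib, hparseval, hnorm, mul_one, Finset.sum_const,
          Finset.card_univ, nsmul_eq_mul]
        ring

end VectorFieldCalculus

theorem vectorial_torsion_parallel_general {C X : Type*} [CommRing C] [Algebra ℝ C]
    [AddCommGroup X] [Module C X] {n : ℕ}
    (V : VectorFieldCalculus C X) (v : X)
    (nab : X → X → X)
    (hnab : ∀ a b, nab a b = V.lc a b + V.g a b • v - V.g v b • a)
    (hflat : ∀ a b c, nab a (nab b c) - nab b (nab a c) - nab (V.bracket a b) c = 0)
    (hparv : ∀ a, nab a v = 0)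
    (e : Fin n → X)
    (horth : ∀ i j, V.g (e i) (e j) = if i = j then 1 else 0)
    (hspan : ∀ a, a = ∑ i, V.g a (e i) • e i)
    (Rg : X → X → X → X)
    (hRg : ∀ a b c, Rg a b c =
      V.lc a (V.lc b c) - V.lc b (V.lc a c) - V.lc (V.bracket a b) c) :
    (∀ a b c, Rg a b c = - (V.g v v • (V.g b c • a - V.g a c • b)))
    ∧ (∑ i, V.g (V.lc (e i) v) (e i) = ((n : C) - 1) * V.g v v)
    ∧ V.lc v v = 0 := by
  obtain rfl : nab = V.vectorialTorsion v := funext₂ hnab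
  obtain rfl : Rg = V.curvature V.lc := funext₃ hRg
  refine ⟨fun a b c ↦ ?_, ?_, ?_⟩
  · have hflat := hflat a b c
    rw [← VectorFieldCalculus.curvature,
      VectorFieldCalculus.curvature_vectorialTorsion_of_parallel hparv] at hflat
    exact eq_neg_of_add_eq_zero_left hflat
  · simpa using VectorFieldCalculus.sum_g_lc_eq_of_parallel (fun i ↦ by simp [horth]) hspan hparv
  · simpa using VectorFieldCalculus.lc_eq_of_vectorialTorsion_eq_zero (hparv v)

/-- Let `∇_a b = ∇^g_a b + ⟨a,b⟩v - ⟨v,b⟩a` be the metric connection with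
vectorial torsion given by a vector field `v` on `(Mⁿ,g)`, `n ≥ 2`.  If `∇` is flat and
`∇v = 0`, then `M` has constant sectional curvature `-‖v‖²`
(`R^g(a,b)c = -‖v‖²(⟨b,c⟩a - ⟨a,c⟩b)`), the divergence of `v` is the constant
`(n-1)‖v‖²`, and `∇^g_v v = 0` (the integral curves of `v` are geodesics). -/
theorem vectorial_torsion_parallel {C X : Type*} [CommRing C] [Algebra ℝ C]
    [AddCommGroup X] [Module C X] {n : ℕ} (hn : 2 ≤ n)
    (V : VectorFieldCalculus C X) (v : X)
    (nab : X → X → X)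
    (hnab : ∀ a b, nab a b = V.lc a b + V.g a b • v - V.g v b • a)
    (hflat : ∀ a b c, nab a (nab b c) - nab b (nab a c) - nab (V.bracket a b) c = 0)
    (hparv : ∀ a, nab a v = 0)
    (e : Fin n → X)
    (horth : ∀ i j, V.g (e i) (e j) = if i = j then 1 else 0)
    (hspan : ∀ a, a = ∑ i, V.g a (e i) • e i)
    (Rg : X → X → X → X)
    (hRg : ∀ a b c, Rg a b c =
      V.lc a (V.lc b c) - V.lc b (V.lc a c) - V.lc (V.bracket a b) c) :
    (∀ a b c, Rg a b c = - (V.g v v • (V.g b c • a - V.g a c • b)))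
    ∧ (∑ i, V.g (V.lc (e i) v) (e i) = ((n : C) - 1) * V.g v v)
    ∧ V.lc v v = 0 :=
  vectorial_torsion_parallel_general V v nab hnab hflat hparv e horth hspan Rg hRg
end

section
/- Let T be a 3-form on a Euclidean vector space V of dimension n that defines a vector cross product, i.e. ‖T(X,Y)‖² = 4(‖X‖²‖Y‖² − ⟨X,Y⟩²) for all X,Y (so (1/2)T(·,·) is a cross product). Then n ∈ {3, 7} (assuming n ≥ 3 and T ≠ 0). -/
/-!
Halving `T` gives a bilinear cross product `×` with `⟪x × y, z⟫` cyclic and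
`‖x × y‖² = ‖x‖²‖y‖² - ⟪x, y⟫²`; polarizing the latter gives the identities
`x × (x × y) = ⟪x, y⟫ x - ⟪x, x⟫ y` and `x × (y × z) = -y × (x × z)` for pairwise orthogonal
`x, y, z`. If `e` is an orthonormal frame and `u` a unit vector orthogonal to `e` and to all
products `eᵢ × eⱼ`, then `e ∪ u × e ∪ {u}` is again orthonormal. Starting from a unit vector `a`
and doubling twice (by `b`, then by `u`) yields seven orthonormal vectors as soon as `n ≥ 4`.
If a unit vector `w` were orthogonal to all seven, then with `v = u × w` one computes
`(u × a) × (b × w)` in two ways and gets `a × (b × v) = -a × (b × v)`, whereas `a × (b × v)` is a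
unit vector. Hence `n = 7`.
-/

open Module RealInnerProductSpace

theorem exists_unit_orthogonal {E ι : Type*} [NormedAddCommGroup E] [InnerProductSpace ℝ E]
    [FiniteDimensional ℝ E] [Fintype ι] (v : ι → E) (h : Fintype.card ι < finrank ℝ E) :
    ∃ u, ‖u‖ = 1 ∧ ∀ i, ⟪v i, u⟫ = 0 := by
  set K := Submodule.span ℝ (Set.range v)
  have hK : finrank ℝ K ≤ Fintype.card ι := finrank_range_le_card v
  have : Nontrivial Kᗮ := by
    rw [← finrank_pos_iff (R := ℝ)]
    have := K.finrank_add_finrank_orthogonal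
    omega
  obtain ⟨u, hu⟩ := exists_norm_eq Kᗮ zero_le_one
  exact ⟨u, hu, fun i => K.inner_right_of_mem_orthogonal (Submodule.subset_span ⟨i, rfl⟩) u.2⟩

structure VectorCrossProduct (E : Type*) [NormedAddCommGroup E] [InnerProductSpace ℝ E] where
  cross : E → E → E
  cross_anticomm : ∀ x y, cross x y = -cross y x
  cross_add_right : ∀ x y z, cross x (y + z) = cross x y + cross x z
  cross_smul_right : ∀ (r : ℝ) x y, cross x (r • y) = r • cross x y
  inner_cross_rotate : ∀ x y z, ⟪cross x y, z⟫ = ⟪cross y z, x⟫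
  norm_cross_sq : ∀ x y, ‖cross x y‖ ^ 2 = ‖x‖ ^ 2 * ‖y‖ ^ 2 - ⟪x, y⟫ ^ 2

namespace VectorCrossProduct

variable {E : Type*} [NormedAddCommGroup E] [InnerProductSpace ℝ E] (C : VectorCrossProduct E)

theorem cross_neg_right (x y : E) : C.cross x (-y) = -C.cross x y := by
  simpa using C.cross_smul_right (-1) x y

theorem cross_self (x : E) : C.cross x x = 0 := by
  have := C.cross_anticomm x x
  rwa [eq_neg_iff_add_eq_zero, ← two_smul ℝ, smul_eq_zero_iff_right two_ne_zero] at this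

theorem cross_add_left (x y z : E) : C.cross (x + y) z = C.cross x z + C.cross y z := by
  rw [C.cross_anticomm, C.cross_add_right, neg_add, ← C.cross_anticomm, ← C.cross_anticomm]

theorem inner_cross_self_left (x y : E) : ⟪C.cross x y, x⟫ = 0 := by
  rw [← C.inner_cross_rotate, C.cross_self, inner_zero_left]

theorem inner_cross_cross (x y z : E) :
    ⟪C.cross x y, C.cross x z⟫ = ⟪x, x⟫ * ⟪y, z⟫ - ⟪x, y⟫ * ⟪x, z⟫ := by
  have h := C.norm_cross_sq x (y + z)
  rw [C.cross_add_right, ← real_inner_self_eq_norm_sq, ← real_inner_self_eq_norm_sq,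
    ← real_inner_self_eq_norm_sq] at h
  have hy := C.norm_cross_sq x y
  have hz := C.norm_cross_sq x z
  rw [← real_inner_self_eq_norm_sq, ← real_inner_self_eq_norm_sq,
    ← real_inner_self_eq_norm_sq] at hy hz
  simp only [inner_add_left, inner_add_right, real_inner_comm y z,
    real_inner_comm (C.cross x y) (C.cross x z)] at h
  linear_combination (h - hy - hz) / 2

theorem cross_cross_self (x y : E) : C.cross x (C.cross x y) = ⟪x, y⟫ • x - ⟪x, x⟫ • y := by
  refine ext_inner_right ℝ fun z => ?_
  rw [C.inner_cross_rotate, C.inner_cross_rotate, C.cross_anticomm z, inner_neg_left,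
    real_inner_comm, C.inner_cross_cross, inner_sub_left, real_inner_smul_left,
    real_inner_smul_left, real_inner_comm z y]
  ring

theorem cross_cross_add_cross_cross (x y z : E) :
    C.cross x (C.cross y z) + C.cross y (C.cross x z) =
      ⟪x, z⟫ • y + ⟪y, z⟫ • x - (2 * ⟪x, y⟫) • z := by
  have h := C.cross_cross_self (x + y) z
  simp only [C.cross_add_left, C.cross_add_right, inner_add_left, inner_add_right,
    real_inner_comm x y] at h
  linear_combination (norm := module) h - C.cross_cross_self x z - C.cross_cross_self y z

theorem cross_cross_of_orthogonal {x y z : E} (hxy : ⟪x, y⟫ = 0) (hxz : ⟪x, z⟫ = 0)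
    (hyz : ⟪y, z⟫ = 0) : C.cross x (C.cross y z) = -C.cross y (C.cross x z) := by
  have h := C.cross_cross_add_cross_cross x y z
  rw [hxy, hxz, hyz] at h
  linear_combination (norm := module) h

/-- Cayley–Dickson doubling of the frame `e` by `u`. -/
def double {ι : Type*} (e : ι → E) (u : E) : (ι ⊕ ι) ⊕ Unit → E :=
  Sum.elim (Sum.elim e fun i => C.cross u (e i)) fun _ => u

theorem orthonormal_double {ι : Type*} {e : ι → E} (he : Orthonormal ℝ e) {u : E}
    (hu : ‖u‖ = 1) (heu : ∀ i, ⟪e i, u⟫ = 0) (hprod : ∀ i j, ⟪C.cross (e i) (e j), u⟫ = 0) :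
    Orthonormal ℝ (C.double e u) := by
  classical
  have hue : ∀ i, ⟪u, e i⟫ = 0 := fun i => by rw [real_inner_comm, heu]
  have hcross_e : ∀ i j, ⟪C.cross u (e i), e j⟫ = 0 := fun i j => by
    rw [C.inner_cross_rotate, hprod]
  have he_cross : ∀ i j, ⟪e i, C.cross u (e j)⟫ = 0 := fun i j => by
    rw [real_inner_comm, hcross_e]
  have hcross_u : ∀ i, ⟪C.cross u (e i), u⟫ = 0 := fun i => C.inner_cross_self_left u (e i)
  have hu_cross : ∀ i, ⟪u, C.cross u (e i)⟫ = 0 := fun i => by rw [real_inner_comm, hcross_u]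
  rw [orthonormal_iff_ite]
  rintro ((i | i) | ⟨⟩) ((j | j) | ⟨⟩) <;>
    simp [double, orthonormal_iff_ite.mp he, C.inner_cross_cross, hu, heu, hue, hcross_e,
      he_cross, hcross_u, hu_cross]

theorem inner_cross_double_single_eq_zero {a b u : E}
    (hu : ∀ i, ⟪C.double (fun _ : Unit => a) b i, u⟫ = 0) (i j) :
    ⟪C.cross (C.double (fun _ : Unit => a) b i) (C.double (fun _ : Unit => a) b j), u⟫ = 0 := by
  simp only [double, Sum.forall, Sum.elim_inl, Sum.elim_inr, forall_const] at hu
  obtain ⟨⟨hau, hbau⟩, hbu⟩ := hu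
  have hspan : ∀ x y, ⟪x, u⟫ = 0 → ⟪y, u⟫ = 0 → ⟪C.cross x (C.cross x y), u⟫ = 0 := by
    intro x y hx hy
    rw [C.cross_cross_self, inner_sub_left, real_inner_smul_left, real_inner_smul_left, hx, hy]
    ring
  have habau : ⟪C.cross a (C.cross b a), u⟫ = 0 := by
    rw [C.cross_anticomm b a, C.cross_neg_right, inner_neg_left, hspan a b hau hbu, neg_zero]
  rcases i with (⟨⟩ | ⟨⟩) | ⟨⟩ <;> rcases j with (⟨⟩ | ⟨⟩) | ⟨⟩ <;>
    simp [double, C.cross_self, C.cross_anticomm (C.cross b a) a,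
      C.cross_anticomm (C.cross b a) b, C.cross_anticomm a b, hbau, habau, hspan b a hbu hau]

theorem norm_cross_eq_one {x y : E} (hx : ‖x‖ = 1) (hy : ‖y‖ = 1) (hxy : ⟪x, y⟫ = 0) :
    ‖C.cross x y‖ = 1 := by
  have h := C.norm_cross_sq x y
  rw [hx, hy, hxy] at h
  nlinarith [norm_nonneg (C.cross x y)]

theorem inner_cross_eq_neg_inner_cross (u w x : E) : ⟪C.cross u w, x⟫ = -⟪C.cross u x, w⟫ := by
  rw [C.inner_cross_rotate, C.inner_cross_rotate, C.cross_anticomm, inner_neg_left]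

theorem cross_cross_cross_eq_zero {a b u w : E} (hab : ⟪a, b⟫ = 0) (hua : ⟪u, a⟫ = 0)
    (hub : ⟪u, b⟫ = 0) (huab : ⟪C.cross u a, b⟫ = 0) (hwa : ⟪a, w⟫ = 0) (hwb : ⟪b, w⟫ = 0)
    (hwu : ⟪u, w⟫ = 0) (hwba : ⟪C.cross b a, w⟫ = 0) (hwua : ⟪C.cross u a, w⟫ = 0)
    (hwub : ⟪C.cross u b, w⟫ = 0) : C.cross a (C.cross b (C.cross u w)) = 0 := by
  set v := C.cross u w
  have hva : ⟪v, a⟫ = 0 := by rw [C.inner_cross_eq_neg_inner_cross, hwua, neg_zero]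
  have hvb : ⟪v, b⟫ = 0 := by rw [C.inner_cross_eq_neg_inner_cross, hwub, neg_zero]
  have hbw_u : ⟪C.cross b w, u⟫ = 0 := by
    rw [C.inner_cross_rotate, C.cross_anticomm, inner_neg_left, hvb, neg_zero]
  have hbw_a : ⟪C.cross b w, a⟫ = 0 := by
    rw [C.inner_cross_rotate, C.inner_cross_rotate, C.cross_anticomm, inner_neg_left, hwba,
      neg_zero]
  have hua_w : C.cross (C.cross u a) w = C.cross a v := by
    rw [C.cross_anticomm, C.cross_cross_of_orthogonal ((real_inner_comm u w).trans hwu)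
        ((real_inner_comm a w).trans hwa) hua, neg_neg,
      C.cross_cross_of_orthogonal ((real_inner_comm u a).trans hua) hwa hwu,
      C.cross_anticomm a w, C.cross_neg_right, neg_neg]
  have hbw_u_cross : C.cross (C.cross b w) u = C.cross b v := by
    rw [C.cross_anticomm, C.cross_cross_of_orthogonal hub hwu hwb, neg_neg]
  -- expand `(u × a) × (b × w)` in two ways
  have h₁ : C.cross (C.cross u a) (C.cross b w) = -C.cross b (C.cross a v) := by
    rw [C.cross_cross_of_orthogonal huab hwua hwb, hua_w]
  have h₂ : C.cross (C.cross u a) (C.cross b w) = -C.cross a (C.cross b v) := by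
    rw [C.cross_anticomm, C.cross_anticomm u a, C.cross_neg_right, neg_neg,
      C.cross_cross_of_orthogonal hbw_a hbw_u ((real_inner_comm u a).trans hua), hbw_u_cross]
  have hanti : C.cross b (C.cross a v) = -C.cross a (C.cross b v) :=
    C.cross_cross_of_orthogonal ((real_inner_comm a b).trans hab)
      ((real_inner_comm v b).trans hvb) ((real_inner_comm v a).trans hva)
  have h := neg_injective (h₂.symm.trans h₁)
  rwa [hanti, eq_neg_iff_add_eq_zero, ← two_smul ℝ, smul_eq_zero_iff_right two_ne_zero] at h

theorem not_exists_unit_orthogonal_double_double {a b u : E}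
    (ho : Orthonormal ℝ (C.double (C.double (fun _ : Unit => a) b) u)) :
    ¬ ∃ w, ‖w‖ = 1 ∧ ∀ i, ⟪C.double (C.double (fun _ : Unit => a) b) u i, w⟫ = 0 := by
  rintro ⟨w, hw, hwo⟩
  simp only [double, Sum.forall, Sum.elim_inl, Sum.elim_inr, forall_const] at hwo
  obtain ⟨⟨⟨⟨hwa, hwba⟩, hwb⟩, ⟨⟨hwua, hwuba⟩, hwub⟩⟩, hwu⟩ := hwo
  have ha : ‖a‖ = 1 := ho.1 (.inl (.inl (.inl (.inl ()))))
  have hb : ‖b‖ = 1 := ho.1 (.inl (.inl (.inr ())))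
  have hu : ‖u‖ = 1 := ho.1 (.inr ())
  have hab : ⟪a, b⟫ = 0 :=
    ho.2 (i := .inl (.inl (.inl (.inl ())))) (j := .inl (.inl (.inr ()))) (by simp)
  have hua : ⟪u, a⟫ = 0 := ho.2 (i := .inr ()) (j := .inl (.inl (.inl (.inl ())))) (by simp)
  have hub : ⟪u, b⟫ = 0 := ho.2 (i := .inr ()) (j := .inl (.inl (.inr ()))) (by simp)
  have huab : ⟪C.cross u a, b⟫ = 0 :=
    ho.2 (i := .inl (.inr (.inl (.inl ())))) (j := .inl (.inl (.inr ()))) (by simp)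
  have hzero := C.cross_cross_cross_eq_zero hab hua hub huab hwa hwb hwu hwba hwua hwub
  have hv : ‖C.cross u w‖ = 1 := C.norm_cross_eq_one hu hw hwu
  have hbv : ⟪b, C.cross u w⟫ = 0 := by
    rw [real_inner_comm, C.inner_cross_eq_neg_inner_cross, hwub, neg_zero]
  have habv : ⟪a, C.cross b (C.cross u w)⟫ = 0 := by
    rw [real_inner_comm, C.inner_cross_rotate, C.inner_cross_rotate, C.cross_anticomm,
      inner_neg_left, real_inner_comm, C.inner_cross_eq_neg_inner_cross, hwuba, neg_zero,
      neg_zero]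
  have hunit := C.norm_cross_eq_one ha (C.norm_cross_eq_one hb hv hbv) habv
  rw [hzero, norm_zero] at hunit
  exact zero_ne_one hunit

end VectorCrossProduct

theorem VectorCrossProduct.finrank_eq_seven {E : Type*} [NormedAddCommGroup E]
    [InnerProductSpace ℝ E] [FiniteDimensional ℝ E] (C : VectorCrossProduct E)
    (h : 4 ≤ finrank ℝ E) : finrank ℝ E = 7 := by
  obtain ⟨a, ha, -⟩ := exists_unit_orthogonal (Empty.elim : Empty → E) (by simp; omega)
  obtain ⟨b, hb, hab⟩ := exists_unit_orthogonal (fun _ : Unit => a) (by simp; omega)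
  have hq : Orthonormal ℝ (C.double (fun _ : Unit => a) b) :=
    C.orthonormal_double (by simp [ha]) hb hab (by simp [C.cross_self])
  obtain ⟨u, hu, hqu⟩ := exists_unit_orthogonal (C.double (fun _ : Unit => a) b) (by simp; omega)
  have ho := C.orthonormal_double hq hu hqu (C.inner_cross_double_single_eq_zero hqu)
  have h7 : 7 ≤ finrank ℝ E := by simpa using ho.linearIndependent.fintype_card_le_finrank
  by_contra h8
  exact C.not_exists_unit_orthogonal_double_double ho
    (exists_unit_orthogonal _ (by simp; omega))

noncomputable def VectorCrossProduct.ofThreeForm {E : Type*} [NormedAddCommGroup E]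
    [InnerProductSpace ℝ E]
    (T : E → E → E → ℝ) (hlin : ∀ Y Z, IsLinearMap ℝ fun X => T X Y Z)
    (hskew1 : ∀ X Y Z, T X Y Z = -T Y X Z) (hskew2 : ∀ X Y Z, T X Y Z = -T X Z Y)
    (t : E → E → E) (ht : ∀ X Y Z, ⟪t X Y, Z⟫ = T X Y Z)
    (hcross : ∀ X Y, ‖t X Y‖ ^ 2 = 4 * (‖X‖ ^ 2 * ‖Y‖ ^ 2 - ⟪X, Y⟫ ^ 2)) :
    VectorCrossProduct E where
  cross X Y := (2⁻¹ : ℝ) • t X Y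
  cross_anticomm X Y := ext_inner_right ℝ fun Z => by
    rw [inner_neg_left, real_inner_smul_left, real_inner_smul_left, ht, ht, hskew1]; ring
  cross_add_right X Y Y' := ext_inner_right ℝ fun Z => by
    simp only [inner_add_left, real_inner_smul_left, ht]
    rw [hskew1 X, (hlin X Z).map_add, hskew1 X Y, hskew1 X Y']
    ring
  cross_smul_right r X Y := ext_inner_right ℝ fun Z => by
    simp only [real_inner_smul_left, ht]
    rw [hskew1 X, (hlin X Z).map_smul, hskew1 X Y, smul_eq_mul]
    ring
  inner_cross_rotate X Y Z := by
    rw [real_inner_smul_left, real_inner_smul_left, ht, ht, hskew1 X Y Z, hskew2 Y X Z, neg_neg]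
  norm_cross_sq X Y := by
    rw [norm_smul, mul_pow, hcross, Real.norm_of_nonneg (by norm_num)]
    ring

theorem cross_product_dimension_general {n : ℕ} (hn : 3 ≤ n)
    (T : EuclideanSpace ℝ (Fin n) → EuclideanSpace ℝ (Fin n) → EuclideanSpace ℝ (Fin n) → ℝ)
    (hlin : ∀ Y Z, IsLinearMap ℝ fun X => T X Y Z)
    (hskew1 : ∀ X Y Z, T X Y Z = - T Y X Z)
    (hskew2 : ∀ X Y Z, T X Y Z = - T X Z Y)
    (t : EuclideanSpace ℝ (Fin n) → EuclideanSpace ℝ (Fin n) → EuclideanSpace ℝ (Fin n))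
    (ht : ∀ X Y Z, (inner ℝ (t X Y) Z : ℝ) = T X Y Z)
    (hcross : ∀ X Y, ‖t X Y‖ ^ 2 = 4 * (‖X‖ ^ 2 * ‖Y‖ ^ 2 - (inner ℝ X Y : ℝ) ^ 2)) :
    n = 3 ∨ n = 7 := by
  rcases Nat.lt_or_ge n 4 with h | h
  · left; omega
  · right
    simpa using (VectorCrossProduct.ofThreeForm T hlin hskew1 hskew2 t ht hcross).finrank_eq_seven
      (by simpa using h)

/-- Let `T ≠ 0` be a 3-form on a Euclidean vector space of dimension
`n ≥ 3` defining a vector cross product, i.e. `‖T(X,Y)‖² = 4(‖X‖²‖Y‖² - ⟨X,Y⟩²)` for all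
`X, Y` (so that `(1/2)T(·,·)` is a binary cross product).  Then `n = 3` or `n = 7`. -/
theorem cross_product_dimension {n : ℕ} (hn : 3 ≤ n)
    (T : EuclideanSpace ℝ (Fin n) → EuclideanSpace ℝ (Fin n) → EuclideanSpace ℝ (Fin n) → ℝ)
    (hlin : ∀ Y Z, IsLinearMap ℝ fun X => T X Y Z)
    (hskew1 : ∀ X Y Z, T X Y Z = - T Y X Z)
    (hskew2 : ∀ X Y Z, T X Y Z = - T X Z Y)
    (t : EuclideanSpace ℝ (Fin n) → EuclideanSpace ℝ (Fin n) → EuclideanSpace ℝ (Fin n))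
    (ht : ∀ X Y Z, (inner ℝ (t X Y) Z : ℝ) = T X Y Z)
    (hT0 : ∃ X Y Z, T X Y Z ≠ 0)
    (hcross : ∀ X Y, ‖t X Y‖ ^ 2 = 4 * (‖X‖ ^ 2 * ‖Y‖ ^ 2 - (inner ℝ X Y : ℝ) ^ 2)) :
    n = 3 ∨ n = 7 :=
  cross_product_dimension_general hn T hlin hskew1 hskew2 t ht hcross
end
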